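/- Let X₁, X₂, X₃, Y_R, Y_S be random variables with values in finite sets such that the conditional law factorizes as p(y_R, y_S | x₁, x₂, x₃) = p(y_R | x₃) · p(y_S | x₁, x₂) (i.e., Y_R is conditionally independent of (X₁, X₂, Y_S) given X₃, and Y_S is conditionally independent of (X₃, Y_R) given (X₁, X₂)). Then I(X₁, X₂, X₃; Y_R, Y_S) ≤ I(X₃; Y_R) + I(X₁, X₂; Y_S). -/

import Mathlib

open scoped BigOperators

open Classical in
/-- Probability of an event under a weight function on a finite sample space. -/
noncomputable def pr {Ω : Type} [Fintype Ω] (p : Ω → ℝ) (E : Ω → Prop) : ℝ :=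
  ∑ ω, if E ω then p ω else 0

/-- Shannon entropy (natural log) of a random variable on a finite space. -/
noncomputable def ent {Ω A : Type} [Fintype Ω] [Fintype A] (p : Ω → ℝ) (X : Ω → A) : ℝ :=
  -∑ a : A, pr p (fun ω => X ω = a) * Real.log (pr p (fun ω => X ω = a))

/-- Conditional entropy H(X | Y). -/
noncomputable def condEnt {Ω A B : Type} [Fintype Ω] [Fintype A] [Fintype B]
    (p : Ω → ℝ) (X : Ω → A) (Y : Ω → B) : ℝ :=
  ent p (fun ω => (X ω, Y ω)) - ent p Y

/-- Mutual information I(X ; Y). -/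
noncomputable def mi {Ω A B : Type} [Fintype Ω] [Fintype A] [Fintype B]
    (p : Ω → ℝ) (X : Ω → A) (Y : Ω → B) : ℝ :=
  ent p X + ent p Y - ent p (fun ω => (X ω, Y ω))

/-- Conditional mutual information I(X ; Y | Z). -/
noncomputable def condMI {Ω A B C : Type} [Fintype Ω] [Fintype A] [Fintype B] [Fintype C]
    (p : Ω → ℝ) (X : Ω → A) (Y : Ω → B) (Z : Ω → C) : ℝ :=
  condEnt p X Z + condEnt p Y Z - condEnt p (fun ω => (X ω, Y ω)) Z

/-- `CondIndep p X Y Z` : the Markov chain X — Y — Z holds, i.e. X and Z are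
conditionally independent given Y. -/
def CondIndep {Ω A B C : Type} [Fintype Ω] (p : Ω → ℝ)
    (X : Ω → A) (Y : Ω → B) (Z : Ω → C) : Prop :=
  ∀ (a : A) (b : B) (c : C),
    pr p (fun ω => X ω = a ∧ Y ω = b ∧ Z ω = c) * pr p (fun ω => Y ω = b) =
    pr p (fun ω => X ω = a ∧ Y ω = b) * pr p (fun ω => Y ω = b ∧ Z ω = c)

/-!
Entropy is the expectation of `-log` of the probability of the atom containing the sample point.
If `X — Y — Z` is a Markov chain, these atom probabilities factor pointwise, so `I(X;Z|Y) = 0`;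
and `I(X;Y|Z) ≥ 0` follows from `log t ≥ 1 - 1/t`, because `P(X,Z) P(Y,Z) / P(Z)` has total mass
at most one. With `X = (X₁,X₂,X₃)`, the two Markov chains give
`H(X,Y_R,Y_S) = H(X₃,Y_R) + H(X,Y_S) - H(X₃) = H(X₁,X₂,Y_S) + H(X,Y_R) - H(X₁,X₂)`;
adding these and using `I(Y_R;Y_S|X) ≥ 0` and `I(Y_R;Y_S) ≥ 0` gives the bound.
-/

open Real

section
variable {Ω A B C : Type} [Fintype Ω] {p : Ω → ℝ}

theorem pr_congr {E F : Ω → Prop} (h : ∀ ω, E ω ↔ F ω) : pr p E = pr p F := by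
  rw [show E = F from funext fun ω => propext (h ω)]

theorem pr_nonneg (hp : ∀ ω, 0 ≤ p ω) (E : Ω → Prop) : 0 ≤ pr p E := by
  classical
  exact Finset.sum_nonneg fun ω _ => ite_nonneg (hp ω) le_rfl

theorem sum_pr_mul [Fintype A] (X : Ω → A) (f : A → ℝ) :
    ∑ a, pr p (fun ω => X ω = a) * f a = ∑ ω, p ω * f (X ω) := by
  classical
  simp only [pr, Finset.sum_mul, ite_mul, zero_mul]
  rw [Finset.sum_comm]
  simp

theorem sum_pr_pair_eq [Fintype A] (X : Ω → A) (Z : Ω → C) (c : C) :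
    ∑ a, pr p (fun ω => (X ω, Z ω) = (a, c)) = pr p (fun ω => Z ω = c) := by
  classical
  simp only [pr]
  rw [Finset.sum_comm]
  refine Finset.sum_congr rfl fun ω _ => ?_
  by_cases hc : Z ω = c <;> simp [hc]

noncomputable def atomPr (p : Ω → ℝ) (X : Ω → A) (ω : Ω) : ℝ :=
  pr p (fun ω' => X ω' = X ω)

theorem le_atomPr (hp : ∀ ω, 0 ≤ p ω) (X : Ω → A) (ω : Ω) : p ω ≤ atomPr p X ω := by
  classical
  have := Finset.single_le_sum (f := fun ω' => if X ω' = X ω then p ω' else 0)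
    (fun ω' _ => ite_nonneg (hp ω') le_rfl) (Finset.mem_univ ω)
  simpa [atomPr, pr] using this

theorem ent_eq_neg_sum_mul_log_atomPr [Fintype A] (X : Ω → A) :
    ent p X = -∑ ω, p ω * log (atomPr p X ω) :=
  congrArg Neg.neg (sum_pr_mul X fun a => log (pr p fun ω => X ω = a))

theorem ent_congr [Fintype A] [Fintype B] {X : Ω → A} {Y : Ω → B}
    (h : ∀ ω ω', X ω' = X ω ↔ Y ω' = Y ω) : ent p X = ent p Y := by
  simp only [ent_eq_neg_sum_mul_log_atomPr, atomPr, pr_congr (h _)]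

theorem ent_prod_comm [Fintype A] [Fintype B] (p : Ω → ℝ) (X : Ω → A) (Y : Ω → B) :
    ent p (fun ω => (X ω, Y ω)) = ent p (fun ω => (Y ω, X ω)) :=
  ent_congr fun _ _ => by simp only [Prod.mk.injEq]; exact and_comm

end

section
variable {Ω A B C : Type} [Fintype Ω] [Fintype A] [Fintype B] [Fintype C] {p : Ω → ℝ}

theorem condMI_eq_sum (X : Ω → A) (Y : Ω → B) (Z : Ω → C) :
    condMI p X Y Z = ∑ ω, p ω *
      (log (atomPr p (fun ω => ((X ω, Y ω), Z ω)) ω) + log (atomPr p Z ω)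
        - log (atomPr p (fun ω => (X ω, Z ω)) ω) - log (atomPr p (fun ω => (Y ω, Z ω)) ω)) := by
  simp only [condMI, condEnt, ent_eq_neg_sum_mul_log_atomPr, mul_add, mul_sub,
    Finset.sum_add_distrib, Finset.sum_sub_distrib]
  ring

theorem sum_mul_atomPr_div_le (hp : ∀ ω, 0 ≤ p ω) (X : Ω → A) (Y : Ω → B) (Z : Ω → C) :
    ∑ ω, p ω * (atomPr p (fun ω => (X ω, Z ω)) ω * atomPr p (fun ω => (Y ω, Z ω)) ω /
      (atomPr p (fun ω => ((X ω, Y ω), Z ω)) ω * atomPr p Z ω)) ≤ ∑ ω, p ω := by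
  set m : A → C → ℝ := fun a c => pr p fun ω => (X ω, Z ω) = (a, c)
  set q : B → C → ℝ := fun b c => pr p fun ω => (Y ω, Z ω) = (b, c)
  set r : C → ℝ := fun c => pr p fun ω => Z ω = c
  calc _ = ∑ v : (A × B) × C, pr p (fun ω => ((X ω, Y ω), Z ω) = v) *
        (m v.1.1 v.2 * q v.1.2 v.2 / (pr p (fun ω => ((X ω, Y ω), Z ω) = v) * r v.2)) :=
        (sum_pr_mul (fun ω => ((X ω, Y ω), Z ω)) _).symm
    _ ≤ ∑ v : (A × B) × C, m v.1.1 v.2 * q v.1.2 v.2 / r v.2 := by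
        refine Finset.sum_le_sum fun v _ => ?_
        rcases (pr_nonneg hp (fun ω => ((X ω, Y ω), Z ω) = v)).eq_or_lt with h0 | hpos
        · rw [← h0, zero_mul]
          exact div_nonneg (mul_nonneg (pr_nonneg hp _) (pr_nonneg hp _)) (pr_nonneg hp _)
        · rw [← mul_div_assoc, mul_div_mul_left _ _ hpos.ne']
    _ = ∑ c, (∑ a, m a c) * (∑ b, q b c) / r c := by
        simp only [Fintype.sum_prod_type, Finset.sum_mul_sum, Finset.sum_div]
        exact (Finset.sum_congr rfl fun a _ => Finset.sum_comm).trans Finset.sum_comm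
    _ = ∑ c, r c := by simp only [m, q, r, sum_pr_pair_eq, mul_self_div_self]
    _ = ∑ ω, p ω := by simpa using sum_pr_mul (p := p) Z fun _ => 1

theorem condMI_nonneg (hp : ∀ ω, 0 ≤ p ω) (X : Ω → A) (Y : Ω → B) (Z : Ω → C) :
    0 ≤ condMI p X Y Z := by
  set j := atomPr p (fun ω => ((X ω, Y ω), Z ω))
  set r := atomPr p Z
  set m := atomPr p (fun ω => (X ω, Z ω))
  set q := atomPr p (fun ω => (Y ω, Z ω))
  have key : ∀ ω, p ω - p ω * (m ω * q ω / (j ω * r ω)) ≤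
      p ω * (log (j ω) + log (r ω) - log (m ω) - log (q ω)) := by
    intro ω
    rcases (hp ω).eq_or_lt with h0 | hpos
    · simp [← h0]
    have hj : 0 < j ω := hpos.trans_le (le_atomPr hp _ ω)
    have hr : 0 < r ω := hpos.trans_le (le_atomPr hp _ ω)
    have hm : 0 < m ω := hpos.trans_le (le_atomPr hp _ ω)
    have hq : 0 < q ω := hpos.trans_le (le_atomPr hp _ ω)
    have hlog : log (j ω * r ω / (m ω * q ω)) =
        log (j ω) + log (r ω) - log (m ω) - log (q ω) := by
      rw [log_div (by positivity) (by positivity), log_mul hj.ne' hr.ne', log_mul hm.ne' hq.ne']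
      ring
    calc p ω - p ω * (m ω * q ω / (j ω * r ω))
        = p ω * (1 - (j ω * r ω / (m ω * q ω))⁻¹) := by rw [inv_div]; ring
      _ ≤ p ω * log (j ω * r ω / (m ω * q ω)) :=
        mul_le_mul_of_nonneg_left (one_sub_inv_le_log_of_pos (by positivity)) hpos.le
      _ = _ := by rw [hlog]
  rw [condMI_eq_sum]
  calc 0 ≤ ∑ ω, p ω - ∑ ω, p ω * (m ω * q ω / (j ω * r ω)) :=
        sub_nonneg.mpr (sum_mul_atomPr_div_le hp X Y Z)
    _ = ∑ ω, (p ω - p ω * (m ω * q ω / (j ω * r ω))) := (Finset.sum_sub_distrib ..).symm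
    _ ≤ _ := Finset.sum_le_sum fun ω _ => key ω

theorem condMI_eq_zero_of_condIndep (hp : ∀ ω, 0 ≤ p ω) {X : Ω → A} {Y : Ω → B} {Z : Ω → C}
    (h : CondIndep p X Y Z) : condMI p X Z Y = 0 := by
  rw [condMI_eq_sum]
  refine Finset.sum_eq_zero fun ω _ => ?_
  rcases (hp ω).eq_or_lt with h0 | hpos
  · rw [← h0, zero_mul]
  have hj := hpos.trans_le (le_atomPr hp (fun ω => ((X ω, Z ω), Y ω)) ω)
  have hr := hpos.trans_le (le_atomPr hp Y ω)
  have hm := hpos.trans_le (le_atomPr hp (fun ω => (X ω, Y ω)) ω)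
  have hq := hpos.trans_le (le_atomPr hp (fun ω => (Z ω, Y ω)) ω)
  have hfac : atomPr p (fun ω => ((X ω, Z ω), Y ω)) ω * atomPr p Y ω =
      atomPr p (fun ω => (X ω, Y ω)) ω * atomPr p (fun ω => (Z ω, Y ω)) ω := by
    convert h (X ω) (Y ω) (Z ω) using 2 <;> refine pr_congr fun ω' => ?_ <;>
      simp only [Prod.mk.injEq] <;> tauto
  have hlog : log (atomPr p (fun ω => ((X ω, Z ω), Y ω)) ω) + log (atomPr p Y ω) =
      log (atomPr p (fun ω => (X ω, Y ω)) ω) + log (atomPr p (fun ω => (Z ω, Y ω)) ω) := by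
    rw [← log_mul hj.ne' hr.ne', ← log_mul hm.ne' hq.ne', hfac]
  rw [hlog]
  ring

theorem mi_nonneg (hp : ∀ ω, 0 ≤ p ω) (hp1 : ∑ ω, p ω = 1) (X : Ω → A) (Y : Ω → B) :
    0 ≤ mi p X Y := by
  have h := condMI_nonneg hp X Y fun _ => ()
  have hU : ent p (fun _ : Ω => ()) = 0 := by simp [ent, pr, hp1]
  have hX : ent p (fun ω => (X ω, ())) = ent p X := ent_congr fun _ _ => by simp
  have hY : ent p (fun ω => (Y ω, ())) = ent p Y := ent_congr fun _ _ => by simp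
  have hXY : ent p (fun ω => ((X ω, Y ω), ())) = ent p (fun ω => (X ω, Y ω)) :=
    ent_congr fun _ _ => by simp
  simp only [condMI, condEnt, hU, hX, hY, hXY] at h
  rw [mi]
  linarith

end

theorem stmt7 {Ω 𝒳₁ 𝒳₂ 𝒳₃ 𝒴R 𝒴S : Type}
    [Fintype Ω] [Fintype 𝒳₁] [Fintype 𝒳₂] [Fintype 𝒳₃] [Fintype 𝒴R] [Fintype 𝒴S]
    (p : Ω → ℝ) (hp : ∀ ω, 0 ≤ p ω) (hp1 : ∑ ω, p ω = 1)
    (X₁ : Ω → 𝒳₁) (X₂ : Ω → 𝒳₂) (X₃ : Ω → 𝒳₃) (YR : Ω → 𝒴R) (YS : Ω → 𝒴S)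
    (h₁ : CondIndep p YR X₃ (fun ω => (X₁ ω, X₂ ω, YS ω)))
    (h₂ : CondIndep p YS (fun ω => (X₁ ω, X₂ ω)) (fun ω => (X₃ ω, YR ω))) :
    mi p (fun ω => (X₁ ω, X₂ ω, X₃ ω)) (fun ω => (YR ω, YS ω)) ≤
      mi p X₃ YR + mi p (fun ω => (X₁ ω, X₂ ω)) YS := by
  have hY := mi_nonneg hp hp1 YR YS
  have hX := condMI_nonneg hp YR YS fun ω => (X₁ ω, X₂ ω, X₃ ω)
  have hR := condMI_eq_zero_of_condIndep hp h₁
  have hS := condMI_eq_zero_of_condIndep hp h₂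
  simp only [mi, condMI, condEnt] at hY hX hR hS ⊢
  have e₁ : ent p (fun ω => ((X₁ ω, X₂ ω, YS ω), X₃ ω)) =
      ent p (fun ω => (YS ω, X₁ ω, X₂ ω, X₃ ω)) :=
    ent_congr fun _ _ => by simp only [Prod.mk.injEq]; tauto
  have e₂ : ent p (fun ω => ((X₃ ω, YR ω), X₁ ω, X₂ ω)) =
      ent p (fun ω => (YR ω, X₁ ω, X₂ ω, X₃ ω)) :=
    ent_congr fun _ _ => by simp only [Prod.mk.injEq]; tauto
  have e₃ : ent p (fun ω => ((YR ω, X₁ ω, X₂ ω, YS ω), X₃ ω)) =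
      ent p (fun ω => ((YR ω, YS ω), X₁ ω, X₂ ω, X₃ ω)) :=
    ent_congr fun _ _ => by simp only [Prod.mk.injEq]; tauto
  have e₄ : ent p (fun ω => ((YS ω, X₃ ω, YR ω), X₁ ω, X₂ ω)) =
      ent p (fun ω => ((YR ω, YS ω), X₁ ω, X₂ ω, X₃ ω)) :=
    ent_congr fun _ _ => by simp only [Prod.mk.injEq]; tauto
  linarith [ent_prod_comm p YR X₃, ent_prod_comm p YS fun ω => (X₁ ω, X₂ ω),
    ent_prod_comm p (fun ω => (X₁ ω, X₂ ω, X₃ ω)) fun ω => (YR ω, YS ω)]
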